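/- arXiv:1805.10654 — 3 statements merged into one kernel-verified Lean document; each statement's English description precedes it below -/
import Mathlib

section
/- The logarithmic regularizer r(x) = log(1 + θ|x|)/log(1+θ) with θ > 0 admits the DC decomposition r = r⁺ − r⁻ with r⁺(x) = η|x|, η = θ/log(1+θ), and r⁻(x) = η|x| − r(x), where r⁺ is convex and r⁻ is convex with Lipschitz continuous derivative on ℝ. -/
/-! Write `r⁻(x) = ψ(|x|) / log(1+θ)` with `ψ(u) = θu − log(1+θu)`. Since `ψ'(0) = 0`,
`r⁻` is differentiable at `0` as well, with derivative `θ² / log(1+θ) · x / (1+θ|x|)`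
everywhere. The map `x ↦ x / (1+θ|x|)` is odd, and both it and `x ↦ x − x / (1+θ|x|)` are
nondecreasing on `[0, ∞)`; hence both are monotone on `ℝ`, which makes `r⁻` convex and its
derivative Lipschitz. -/

open Asymptotics

theorem lipschitzWith_one_of_monotone_of_monotone_sub {f : ℝ → ℝ} (hf : Monotone f)
    (hg : Monotone fun x => x - f x) : LipschitzWith 1 f := by
  refine LipschitzWith.of_dist_le_mul fun x y => ?_
  rw [NNReal.coe_one, one_mul, Real.dist_eq, Real.dist_eq]
  rcases le_total x y with hxy | hyx
  · have hgap := hg hxy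
    rw [abs_of_nonpos (sub_nonpos.2 (hf hxy)), abs_of_nonpos (sub_nonpos.2 hxy)]
    linarith
  · have hgap := hg hyx
    rw [abs_of_nonneg (sub_nonneg.2 (hf hyx)), abs_of_nonneg (sub_nonneg.2 hyx)]
    linarith

theorem hasDerivAt_comp_abs {ψ ψ' : ℝ → ℝ} (hψ : ∀ u, 0 ≤ u → HasDerivAt ψ (ψ' u) u)
    (hψ'0 : ψ' 0 = 0) (x : ℝ) :
    HasDerivAt (fun y => ψ |y|) (SignType.sign x * ψ' |x|) x := by
  rcases eq_or_ne x 0 with rfl | hx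
  -- `ψ(|h|) − ψ(0) = o(|h|) = o(h)`
  · have h0 := hψ 0 le_rfl
    rw [hψ'0, hasDerivAt_iff_isLittleO_nhds_zero] at h0
    rw [hasDerivAt_iff_isLittleO_nhds_zero]
    simp only [zero_add, abs_zero, sign_zero, SignType.coe_zero, zero_mul, smul_zero,
      sub_zero] at h0 ⊢
    exact isLittleO_abs_right.1 (h0.comp_tendsto (continuous_abs.tendsto' 0 0 abs_zero))
  · rw [mul_comm]
    exact (hψ |x| (abs_nonneg x)).comp x (hasDerivAt_abs hx)

noncomputable def linearLogGap (θ u : ℝ) : ℝ := θ * u - Real.log (1 + θ * u)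

section
variable {θ : ℝ}

theorem hasDerivAt_linearLogGap (hθ : 0 ≤ θ) {u : ℝ} (hu : 0 ≤ u) :
    HasDerivAt (linearLogGap θ) (θ ^ 2 * (u / (1 + θ * u))) u := by
  have hpos : 0 < 1 + θ * u := by positivity
  have hlin : HasDerivAt (fun v => θ * v) θ u := by simpa using (hasDerivAt_id u).const_mul θ
  refine (hlin.sub ((hlin.const_add 1).log hpos.ne')).congr_deriv ?_
  field_simp
  ring

theorem hasDerivAt_linearLogGap_abs (hθ : 0 ≤ θ) (x : ℝ) :
    HasDerivAt (fun y => linearLogGap θ |y|) (θ ^ 2 * (x / (1 + θ * |x|))) x := by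
  convert hasDerivAt_comp_abs (fun u hu => hasDerivAt_linearLogGap hθ hu) (by simp) x using 1
  rw [mul_left_comm (SignType.sign x : ℝ), ← mul_div_assoc (SignType.sign x : ℝ), sign_mul_abs]

theorem monotone_div_one_add_mul_abs (hθ : 0 ≤ θ) :
    Monotone fun x : ℝ => x / (1 + θ * |x|) := by
  refine monotone_of_odd_of_monotoneOn_nonneg (fun x => by simp [neg_div]) ?_
  intro u (hu : 0 ≤ u) v (hv : 0 ≤ v) huv
  simp only [abs_of_nonneg hu, abs_of_nonneg hv]
  rw [div_le_div_iff₀ (by positivity) (by positivity)]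
  nlinarith

theorem monotone_sub_div_one_add_mul_abs (hθ : 0 ≤ θ) :
    Monotone fun x : ℝ => x - x / (1 + θ * |x|) := by
  refine monotone_of_odd_of_monotoneOn_nonneg (fun x => by simp [neg_div]; ring) ?_
  intro u (hu : 0 ≤ u) v (hv : 0 ≤ v) huv
  have hu' : 0 < 1 + θ * u := by positivity
  have hv' : 0 < 1 + θ * v := by positivity
  simp only [abs_of_nonneg hu, abs_of_nonneg hv]
  rw [sub_div' hu'.ne', sub_div' hv'.ne', div_le_div_iff₀ hu' hv']
  nlinarith [mul_nonneg (mul_nonneg hθ (add_nonneg hu hv)) (sub_nonneg.2 huv),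
    mul_nonneg (mul_nonneg (mul_nonneg (sq_nonneg θ) hu) hv) (sub_nonneg.2 huv)]

theorem lipschitzWith_one_div_one_add_mul_abs (hθ : 0 ≤ θ) :
    LipschitzWith 1 fun x : ℝ => x / (1 + θ * |x|) :=
  lipschitzWith_one_of_monotone_of_monotone_sub (monotone_div_one_add_mul_abs hθ)
    (monotone_sub_div_one_add_mul_abs hθ)

end

/-- DC decomposition of the logarithmic regularizer
`r(x) = log(1+θ|x|)/log(1+θ)`: with `η = θ/log(1+θ)`, `r⁺(x) = η|x|` is convex
and `r⁻(x) = η|x| − r(x)` is convex with Lipschitz continuous derivative on ℝ. -/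
theorem stmt_5 (θ : ℝ) (hθ : 0 < θ)
    (r rplus rminus : ℝ → ℝ) (η : ℝ)
    (hη : η = θ / Real.log (1 + θ))
    (hr : ∀ x, r x = Real.log (1 + θ * |x|) / Real.log (1 + θ))
    (hrplus : ∀ x, rplus x = η * |x|)
    (hrminus : ∀ x, rminus x = η * |x| - r x) :
    (∀ x, r x = rplus x - rminus x) ∧
    ConvexOn ℝ Set.univ rplus ∧
    ConvexOn ℝ Set.univ rminus ∧
    Differentiable ℝ rminus ∧
    ∃ L : NNReal, LipschitzWith L (deriv rminus) := by
  have hlog : 0 ≤ Real.log (1 + θ) := Real.log_nonneg (by linarith)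
  set c := θ ^ 2 / Real.log (1 + θ)
  have hrminus_eq : rminus = fun x => linearLogGap θ |x| / Real.log (1 + θ) := by
    funext x
    rw [hrminus, hr, hη, linearLogGap, sub_div, mul_div_right_comm]
  have hderiv : ∀ x, HasDerivAt rminus (c * (x / (1 + θ * |x|))) x := fun x => by
    rw [hrminus_eq, ← mul_div_right_comm]
    exact (hasDerivAt_linearLogGap_abs hθ.le x).div_const _
  have hdiff : Differentiable ℝ rminus := fun x => (hderiv x).differentiableAt
  have hderiv_eq : deriv rminus = fun x => c * (x / (1 + θ * |x|)) :=
    funext fun x => (hderiv x).deriv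
  refine ⟨fun x => by rw [hrplus, hrminus]; ring, ?_, ?_, hdiff, ?_⟩
  · have hrplus_eq : rplus = fun x => η • ‖x‖ := funext hrplus
    rw [hrplus_eq]
    exact (convexOn_norm convex_univ).smul (hη ▸ by positivity)
  · refine Monotone.convexOn_univ_of_deriv hdiff ?_
    rw [hderiv_eq]
    exact (monotone_div_one_add_mul_abs hθ.le).const_mul (by positivity)
  · refine ⟨‖c‖₊ * 1, ?_⟩
    rw [hderiv_eq]
    exact (lipschitzWith_smul c).comp (lipschitzWith_one_div_one_add_mul_abs hθ.le)
end

section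
/- Let f: ℝ^d → ℝ be differentiable, h: ℝ^d → ℝ convex, K ⊆ ℝ^d convex, and let x̂ minimize u ↦ f̃(u) + h(u) + πᵀ(u − x) over K, where f̃ is a μ-strongly convex differentiable surrogate satisfying ∇f̃(x) = ∇f(x), and π = 0, evaluated at base point x ∈ K. If x̂ = x, then x is a stationary point of f + h on K, i.e., f'(x; u − x) + h(u) − h(x) ≥ 0 for all u ∈ K. -/
/-!
At a minimizer `x` of `f̃ + h` over `K`, restrict to the segment from `x` to `u ∈ K` and replace
`h` by its chord there, which lies above `h` by convexity. The resulting function of one real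
variable is still minimized at the left endpoint and is differentiable there, so its derivative
`f̃'(x; u - x) + h u - h x` is nonnegative; since `∇f̃(x) = ∇f(x)`, this is stationarity of `f + h`.
-/

open Set

theorem IsMinOn.hasDerivWithinAt_Icc_nonneg {ψ : ℝ → ℝ} {a b ψ' : ℝ} (hab : a < b)
    (hmin : IsMinOn ψ (Icc a b) a) (hψ : HasDerivWithinAt ψ ψ' (Icc a b) a) : 0 ≤ ψ' := by
  have hcone : b - a ∈ posTangentConeAt (Icc a b) a :=
    sub_mem_posTangentConeAt_of_segment_subset (segment_eq_Icc hab.le).subset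
  have := hmin.localize.hasFDerivWithinAt_nonneg hψ.hasFDerivWithinAt hcone
  simp only [ContinuousLinearMap.toSpanSingleton_apply, smul_eq_mul] at this
  exact nonneg_of_mul_nonneg_right this (sub_pos.2 hab)

theorem IsMinOn.fderiv_add_sub_nonneg_of_convexOn {E : Type*} [NormedAddCommGroup E]
    [NormedSpace ℝ E] {g h : E → ℝ} {K : Set E} {x u : E} (hh : ConvexOn ℝ K h)
    (hg : DifferentiableAt ℝ g x) (hmin : IsMinOn (g + h) K x) (hx : x ∈ K) (hu : u ∈ K) :
    0 ≤ fderiv ℝ g x (u - x) + h u - h x := by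
  set ψ : ℝ → ℝ := fun t ↦ g (x + t • (u - x)) + (h x + t * (h u - h x))
  have hψmin : IsMinOn ψ (Icc 0 1) 0 := by
    intro t ⟨ht0, ht1⟩
    have hcomb : (1 - t) • x + t • u = x + t • (u - x) := by module
    have hmem : x + t • (u - x) ∈ K := hcomb ▸ hh.1 hx hu (by linarith) ht0 (by ring)
    have hchord : h (x + t • (u - x)) ≤ (1 - t) * h x + t * h u :=
      hcomb ▸ hh.2 hx hu (by linarith) ht0 (by ring)
    have hxmin : g x + h x ≤ g (x + t • (u - x)) + h (x + t • (u - x)) := hmin hmem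
    simp only [ψ, mem_ofPred_eq, zero_smul, add_zero, zero_mul]
    linarith
  have hline : HasDerivAt (fun t : ℝ ↦ x + t • (u - x)) (u - x) 0 := by
    simpa using ((hasDerivAt_id (0 : ℝ)).smul_const (u - x)).const_add x
  have hgline : HasDerivAt (fun t : ℝ ↦ g (x + t • (u - x))) (fderiv ℝ g x (u - x)) 0 := by
    have hg0 : HasFDerivAt g (fderiv ℝ g x) (x + (0 : ℝ) • (u - x)) := by
      simpa using hg.hasFDerivAt
    exact hg0.comp_hasDerivAt 0 hline
  have hchord : HasDerivAt (fun t : ℝ ↦ h x + t * (h u - h x)) (h u - h x) 0 :=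
    (hasDerivAt_mul_const _).const_add _
  have := hψmin.hasDerivWithinAt_Icc_nonneg one_pos (hgline.add hchord).hasDerivWithinAt
  linarith

theorem stmt_9_general (d : ℕ)
    (f ftil h : EuclideanSpace ℝ (Fin d) → ℝ)
    (K : Set (EuclideanSpace ℝ (Fin d)))
    (hftildiff : Differentiable ℝ ftil)
    (hh : ConvexOn ℝ K h)
    (x xhat : EuclideanSpace ℝ (Fin d)) (hx : x ∈ K)
    (hgrad : gradient ftil x = gradient f x)
    (hmin : ∀ u ∈ K, ftil xhat + h xhat ≤ ftil u + h u)
    (hfix : xhat = x) :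
    ∀ u ∈ K, 0 ≤ inner ℝ (gradient f x) (u - x) + h u - h x := by
  subst hfix
  intro u hu
  rw [← hgrad, inner_gradient_left]
  exact IsMinOn.fderiv_add_sub_nonneg_of_convexOn hh (hftildiff xhat) hmin hx hu

/-- Fixed points of the SCA subproblem are stationary: if `x̂` minimizes
`f̃(·) + h(·)` over `K` (with `π = 0`), where `f̃` is a `μ`-strongly convex
surrogate with `∇f̃(x) = ∇f(x)`, and `x̂ = x`, then `x` is a stationary point
of `f + h` on `K`. -/
theorem stmt_9 (d : ℕ) (μ : ℝ) (hμ : 0 < μ)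
    (f ftil h : EuclideanSpace ℝ (Fin d) → ℝ)
    (K : Set (EuclideanSpace ℝ (Fin d))) (hKcv : Convex ℝ K)
    (hfdiff : Differentiable ℝ f)
    (hftil : StrongConvexOn K μ ftil)
    (hftildiff : Differentiable ℝ ftil)
    (hh : ConvexOn ℝ K h)
    (x xhat : EuclideanSpace ℝ (Fin d)) (hx : x ∈ K) (hxhat : xhat ∈ K)
    (hgrad : gradient ftil x = gradient f x)
    (hmin : ∀ u ∈ K, ftil xhat + h xhat ≤ ftil u + h u)
    (hfix : xhat = x) :
    ∀ u ∈ K, 0 ≤ inner ℝ (gradient f x) (u - x) + h u - h x :=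
  stmt_9_general d f ftil h K hftildiff hh x xhat hx hgrad hmin hfix
end

section
/- Let f̃ be μ-strongly convex differentiable with ∇f̃(x) = ∇f(x) at base point x ∈ K, h convex on convex K, and x̂ = argmin_{u∈K} f̃(u) + h(u). Then (x̂ − x)ᵀ∇f(x) + h(x̂) − h(x) ≤ −μ‖x̂ − x‖². In particular, x̂ − x is a descent direction for f + h at x whenever x̂ ≠ x. -/
/-!
By `μ`-strong convexity, the difference quotient of `φ` at `t ∈ (0, 1]` along the segment from
`v` to `u` is at most `φ u - φ v - μ / 2 * (1 - t) * ‖u - v‖ ^ 2`. Letting `t → 0⁺` gives two facts: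
for `φ = f̃ + h` and its minimizer `v = x̂` the quotients are `≥ 0`, whence the quadratic growth
`φ x̂ + μ / 2 * ‖x - x̂‖ ^ 2 ≤ φ x`; for `φ = f̃` and `v = x` they tend to `⟪∇f̃ x, u - x⟫`, whence
`f̃ x + ⟪∇f̃ x, x̂ - x⟫ + μ / 2 * ‖x̂ - x‖ ^ 2 ≤ f̃ x̂`. Adding the two and using `∇f̃ x = ∇f x`
cancels the values of `f̃`.
-/

open Filter Topology InnerProductSpace

section StrongConvexOn

variable {E : Type*} [NormedAddCommGroup E] [NormedSpace ℝ E] {s : Set E} {m : ℝ} {f : E → ℝ}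
  {x y : E}

lemma StrongConvexOn.apply_add_smul_sub_le (hf : StrongConvexOn s m f) (hx : x ∈ s) (hy : y ∈ s)
    {t : ℝ} (ht₀ : 0 ≤ t) (ht₁ : t ≤ 1) :
    f (x + t • (y - x)) ≤ f x + t * (f y - f x) - t * (m / 2 * (1 - t) * ‖y - x‖ ^ 2) := by
  have h := hf.2 hx hy (sub_nonneg.2 ht₁) ht₀ (sub_add_cancel 1 t)
  rw [smul_eq_mul, smul_eq_mul, norm_sub_rev] at h
  convert h using 2
  · rw [smul_sub, sub_smul, one_smul]; abel
  · ring
  · ring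

lemma StrongConvexOn.add_mul_norm_sub_sq_le_of_isMinOn (hf : StrongConvexOn s m f)
    (hmin : IsMinOn f s x) (hx : x ∈ s) (hy : y ∈ s) :
    f x + m / 2 * ‖y - x‖ ^ 2 ≤ f y := by
  have hbound : ∀ t ∈ Set.Ioc (0 : ℝ) 1, m / 2 * (1 - t) * ‖y - x‖ ^ 2 ≤ f y - f x := by
    rintro t ⟨ht₀, ht₁⟩
    have hseg : x + t • (y - x) ∈ s := by
      simpa [AffineMap.lineMap_apply_module', add_comm] using
        hf.1.lineMap_mem hx hy ⟨ht₀.le, ht₁⟩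
    have := (hmin hseg).trans (hf.apply_add_smul_sub_le hx hy ht₀.le ht₁)
    exact le_of_mul_le_mul_left (by linarith) ht₀
  have hlim : Tendsto (fun t : ℝ => m / 2 * (1 - t) * ‖y - x‖ ^ 2) (𝓝[>] 0)
      (𝓝 (m / 2 * ‖y - x‖ ^ 2)) :=
    ((by fun_prop : Continuous fun t : ℝ => m / 2 * (1 - t) * ‖y - x‖ ^ 2).tendsto' 0 _
      (by ring)).mono_left nhdsWithin_le_nhds
  have := le_of_tendsto hlim (eventually_of_mem (Ioc_mem_nhdsGT one_pos) hbound)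
  linarith

lemma StrongConvexOn.add_apply_sub_add_mul_norm_sub_sq_le {f' : E →L[ℝ] ℝ}
    (hf : StrongConvexOn s m f) (hderiv : HasFDerivAt f f' x) (hx : x ∈ s) (hy : y ∈ s) :
    f x + f' (y - x) + m / 2 * ‖y - x‖ ^ 2 ≤ f y := by
  have hline : HasDerivAt (fun t : ℝ => x + t • (y - x)) (y - x) 0 := by
    simpa using ((hasDerivAt_id (0 : ℝ)).smul_const (y - x)).const_add x
  have hslope := (hderiv.comp_hasDerivAt_of_eq 0 hline (by simp)).tendsto_slope_zero_right
  have hlim : Tendsto (fun t : ℝ => f y - f x - m / 2 * (1 - t) * ‖y - x‖ ^ 2) (𝓝[>] 0)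
      (𝓝 (f y - f x - m / 2 * ‖y - x‖ ^ 2)) :=
    ((by fun_prop : Continuous fun t : ℝ => f y - f x - m / 2 * (1 - t) * ‖y - x‖ ^ 2).tendsto'
      0 _ (by ring)).mono_left nhdsWithin_le_nhds
  have hbound : ∀ t ∈ Set.Ioc (0 : ℝ) 1,
      t⁻¹ * (f (x + t • (y - x)) - f x) ≤ f y - f x - m / 2 * (1 - t) * ‖y - x‖ ^ 2 := by
    rintro t ⟨ht₀, ht₁⟩
    rw [inv_mul_le_iff₀ ht₀]
    linarith [hf.apply_add_smul_sub_le hx hy ht₀.le ht₁]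
  have := le_of_tendsto_of_tendsto hslope hlim
    (eventually_of_mem (Ioc_mem_nhdsGT one_pos) fun t ht => by simpa using hbound t ht)
  linarith

end StrongConvexOn

theorem stmt_10_general (d : ℕ) (μ : ℝ)
    (f ftil h : EuclideanSpace ℝ (Fin d) → ℝ)
    (K : Set (EuclideanSpace ℝ (Fin d)))
    (hftil : StrongConvexOn K μ ftil)
    (hftildiff : Differentiable ℝ ftil)
    (hh : ConvexOn ℝ K h)
    (x xhat : EuclideanSpace ℝ (Fin d)) (hx : x ∈ K) (hxhat : xhat ∈ K)
    (hgrad : gradient ftil x = gradient f x)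
    (hmin : ∀ u ∈ K, ftil xhat + h xhat ≤ ftil u + h u) :
    inner ℝ (gradient f x) (xhat - x) + h xhat - h x ≤ -μ * ‖xhat - x‖ ^ 2 := by
  have hsum : StrongConvexOn K μ (ftil + h) := by
    simpa [StrongConvexOn] using hftil.add (uniformConvexOn_zero.2 hh)
  have hgrowth := hsum.add_mul_norm_sub_sq_le_of_isMinOn hmin hxhat hx
  have hgradineq := hftil.add_apply_sub_add_mul_norm_sub_sq_le
    (hftildiff x).hasGradientAt.hasFDerivAt hx hxhat
  rw [toDual_apply_apply, hgrad] at hgradineq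
  rw [norm_sub_rev] at hgrowth
  simp only [Pi.add_apply] at hgrowth
  linarith

/-- Descent property of the SCA direction: if `x̂` minimizes the strongly
convex surrogate `f̃ + h` over `K`, with `∇f̃(x) = ∇f(x)` at the base point
`x ∈ K`, then `⟨∇f(x), x̂ − x⟩ + h(x̂) − h(x) ≤ −μ‖x̂ − x‖²`. -/
theorem stmt_10 (d : ℕ) (μ : ℝ) (hμ : 0 < μ)
    (f ftil h : EuclideanSpace ℝ (Fin d) → ℝ)
    (K : Set (EuclideanSpace ℝ (Fin d))) (hKcv : Convex ℝ K)
    (hfdiff : Differentiable ℝ f)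
    (hftil : StrongConvexOn K μ ftil)
    (hftildiff : Differentiable ℝ ftil)
    (hh : ConvexOn ℝ K h)
    (x xhat : EuclideanSpace ℝ (Fin d)) (hx : x ∈ K) (hxhat : xhat ∈ K)
    (hgrad : gradient ftil x = gradient f x)
    (hmin : ∀ u ∈ K, ftil xhat + h xhat ≤ ftil u + h u) :
    inner ℝ (gradient f x) (xhat - x) + h xhat - h x ≤ -μ * ‖xhat - x‖ ^ 2 :=
  stmt_10_general d μ f ftil h K hftil hftildiff hh x xhat hx hxhat hgrad hmin
end
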